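/- Assume the Kalman condition holds and that R₃(τ) is invertible for every τ ∈ (0,T]. For τ ∈ (0,T] define S(τ) := R₃(τ)⁻¹R₄(τ). Then S(τ) is symmetric for every τ ∈ (0,T], the curve τ ↦ S(τ) is smooth on (0,T], and its derivative is negative semidefinite: S'(τ) = −Z_V(τ)ᵀ B Bᵀ Z_V(τ) ⪯ 0, where Z_V(τ) = R₁(τ)S(τ) − R₂(τ); in particular S(τ₂) ⪯ S(τ₁) (Loewner order) whenever 0 < τ₁ ≤ τ₂ ≤ T. -/

import Mathlib

open Matrix MeasureTheory Filter Topology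

noncomputable section

namespace LQ

variable {n m : ℕ}

def Om (n : ℕ) : Matrix (Fin n ⊕ Fin n) (Fin n ⊕ Fin n) ℝ :=
  Matrix.fromBlocks 0 1 (-1) 0

def Ham (A Q : Matrix (Fin n) (Fin n) ℝ) (B : Matrix (Fin n) (Fin m) ℝ) :
    Matrix (Fin n ⊕ Fin n) (Fin n ⊕ Fin n) ℝ :=
  Matrix.fromBlocks (B * Bᵀ) A Aᵀ Q

def flow (A Q : Matrix (Fin n) (Fin n) ℝ) (B : Matrix (Fin n) (Fin m) ℝ) (τ : ℝ) :
    Matrix (Fin n ⊕ Fin n) (Fin n ⊕ Fin n) ℝ :=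
  NormedSpace.exp ((-τ) • (Om n * Ham A Q B))

def R1 (A Q : Matrix (Fin n) (Fin n) ℝ) (B : Matrix (Fin n) (Fin m) ℝ) (τ : ℝ) :
    Matrix (Fin n) (Fin n) ℝ := (flow A Q B τ).toBlocks₁₁

def R2 (A Q : Matrix (Fin n) (Fin n) ℝ) (B : Matrix (Fin n) (Fin m) ℝ) (τ : ℝ) :
    Matrix (Fin n) (Fin n) ℝ := (flow A Q B τ).toBlocks₁₂

def R3 (A Q : Matrix (Fin n) (Fin n) ℝ) (B : Matrix (Fin n) (Fin m) ℝ) (τ : ℝ) :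
    Matrix (Fin n) (Fin n) ℝ := (flow A Q B τ).toBlocks₂₁

def R4 (A Q : Matrix (Fin n) (Fin n) ℝ) (B : Matrix (Fin n) (Fin m) ℝ) (τ : ℝ) :
    Matrix (Fin n) (Fin n) ℝ := (flow A Q B τ).toBlocks₂₂

def Kalman (A : Matrix (Fin n) (Fin n) ℝ) (B : Matrix (Fin n) (Fin m) ℝ) : Prop :=
  Submodule.span ℝ
    {v : Fin n → ℝ | ∃ j : Fin n, ∃ i : Fin m, v = (A ^ (j : ℕ)).mulVec (Bᵀ i)} = ⊤

section SAux

open NormedSpace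

variable {n m : ℕ} (A Q : Matrix (Fin n) (Fin n) ℝ) (B : Matrix (Fin n) (Fin m) ℝ)

lemma om_mul_om : Om n * Om n = -1 := by
  simp [Om, Matrix.fromBlocks_multiply, ← Matrix.fromBlocks_one, Matrix.fromBlocks_neg]

lemma om_transpose : (Om n)ᵀ = -Om n := by
  simp [Om, Matrix.fromBlocks_transpose, Matrix.fromBlocks_neg]

lemma ham_transpose (hQ : Q.IsSymm) : (Ham A Q B)ᵀ = Ham A Q B := by
  simp [Ham, Matrix.fromBlocks_transpose, Matrix.transpose_mul, hQ.eq]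

def omU (n : ℕ) : (Matrix (Fin n ⊕ Fin n) (Fin n ⊕ Fin n) ℝ)ˣ where
  val := Om n
  inv := -Om n
  val_inv := by rw [mul_neg, om_mul_om, neg_neg]
  inv_val := by rw [neg_mul, om_mul_om, neg_neg]

lemma hconj (t : ℝ) :
    NormedSpace.exp (t • (Ham A Q B * Om n)) =
      Om n * NormedSpace.exp (t • (Om n * Ham A Q B)) * (-Om n) := by
  have h := Matrix.exp_units_conj (omU n) (t • (Om n * Ham A Q B))
  have h2 : (omU n : Matrix _ _ ℝ) * (t • (Om n * Ham A Q B)) *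
      (((omU n)⁻¹ : (Matrix (Fin n ⊕ Fin n) (Fin n ⊕ Fin n) ℝ)ˣ) :
        Matrix (Fin n ⊕ Fin n) (Fin n ⊕ Fin n) ℝ) = t • (Ham A Q B * Om n) := by
    show Om n * (t • (Om n * Ham A Q B)) * (-Om n) = _
    rw [Matrix.mul_smul, Matrix.smul_mul]
    congr 1
    rw [← mul_assoc, om_mul_om, neg_one_mul, neg_mul_neg]
  rw [h2] at h
  exact h

lemma hexpinv (t : ℝ) (X : Matrix (Fin n ⊕ Fin n) (Fin n ⊕ Fin n) ℝ) :
    NormedSpace.exp (t • X) * NormedSpace.exp ((-t) • X) = 1 := by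
  rw [← Matrix.exp_add_of_commute _ _ (Commute.smul_left (Commute.smul_right rfl _) _)]
  rw [← add_smul, add_neg_cancel, zero_smul, NormedSpace.exp_zero]

lemma flow_transpose (hQ : Q.IsSymm) (τ : ℝ) :
    (flow A Q B τ)ᵀ = NormedSpace.exp (τ • (Ham A Q B * Om n)) := by
  rw [flow, ← Matrix.exp_transpose]
  congr 1
  rw [Matrix.transpose_smul, Matrix.transpose_mul, om_transpose, ham_transpose A Q B hQ,
    mul_neg, smul_neg, neg_smul, neg_neg]

lemma sympl1 (hQ : Q.IsSymm) (τ : ℝ) :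
    (flow A Q B τ)ᵀ * Om n * flow A Q B τ = Om n := by
  rw [flow_transpose A Q B hQ, hconj, flow]
  set E1 := NormedSpace.exp (τ • (Om n * Ham A Q B)) with hE1
  set E2 := NormedSpace.exp ((-τ) • (Om n * Ham A Q B)) with hE2
  have hE : E1 * E2 = 1 := hexpinv τ _
  have h3 : (-Om n) * (Om n * E2) = E2 := by
    rw [neg_mul, ← mul_assoc, om_mul_om, neg_mul, one_mul, neg_neg]
  simp only [mul_assoc]
  rw [h3, hE, mul_one]

lemma sympl2 (hQ : Q.IsSymm) (τ : ℝ) :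
    flow A Q B τ * Om n * (flow A Q B τ)ᵀ = Om n := by
  rw [flow_transpose A Q B hQ, hconj, flow]
  set E1 := NormedSpace.exp (τ • (Om n * Ham A Q B)) with hE1
  set E2 := NormedSpace.exp ((-τ) • (Om n * Ham A Q B)) with hE2
  have hE : E2 * E1 = 1 := by
    have := hexpinv (-τ) (Om n * Ham A Q B)
    rwa [neg_neg] at this
  have h3 : Om n * (Om n * (E1 * (-Om n))) = E1 * Om n := by
    rw [← mul_assoc, om_mul_om, neg_one_mul, mul_neg, neg_neg]
  simp only [mul_assoc]
  rw [h3, ← mul_assoc, hE, one_mul]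



lemma flow_eq_fromBlocks (τ : ℝ) :
    flow A Q B τ = Matrix.fromBlocks (R1 A Q B τ) (R2 A Q B τ) (R3 A Q B τ) (R4 A Q B τ) :=
  (Matrix.fromBlocks_toBlocks _).symm

lemma id_i (hQ : Q.IsSymm) (τ : ℝ) :
    (R1 A Q B τ)ᵀ * R3 A Q B τ = (R3 A Q B τ)ᵀ * R1 A Q B τ := by
  have h := sympl1 A Q B hQ τ
  rw [flow_eq_fromBlocks, Om, Matrix.fromBlocks_transpose, Matrix.fromBlocks_multiply,
    Matrix.fromBlocks_multiply, Matrix.fromBlocks_inj] at h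
  have := h.1
  simp only [Matrix.mul_zero, Matrix.zero_mul, Matrix.mul_one, Matrix.one_mul,
    Matrix.mul_neg, Matrix.neg_mul, mul_neg, neg_mul, zero_add, add_zero,
    Matrix.mul_one, mul_one] at this
  rw [neg_add_eq_sub, sub_eq_zero] at this
  exact this

lemma id_ii (hQ : Q.IsSymm) (τ : ℝ) :
    (R4 A Q B τ)ᵀ * R1 A Q B τ - (R2 A Q B τ)ᵀ * R3 A Q B τ = 1 := by
  have h := sympl1 A Q B hQ τ
  rw [flow_eq_fromBlocks, Om, Matrix.fromBlocks_transpose, Matrix.fromBlocks_multiply,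
    Matrix.fromBlocks_multiply, Matrix.fromBlocks_inj] at h
  have := h.2.2.1
  simp only [Matrix.mul_zero, Matrix.zero_mul, Matrix.mul_one, Matrix.one_mul,
    Matrix.mul_neg, Matrix.neg_mul, mul_neg, neg_mul, zero_add, add_zero, mul_one] at this
  have h2 := congrArg (fun X => -X) this
  simp only [neg_add, neg_neg] at h2
  rw [← h2]; abel

lemma id_iii (hQ : Q.IsSymm) (τ : ℝ) :
    R3 A Q B τ * (R4 A Q B τ)ᵀ = R4 A Q B τ * (R3 A Q B τ)ᵀ := by
  have h := sympl2 A Q B hQ τ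
  rw [flow_eq_fromBlocks, Om, Matrix.fromBlocks_transpose, Matrix.fromBlocks_multiply,
    Matrix.fromBlocks_multiply, Matrix.fromBlocks_inj] at h
  have := h.2.2.2
  simp only [Matrix.mul_zero, Matrix.zero_mul, Matrix.mul_one, Matrix.one_mul,
    Matrix.mul_neg, Matrix.neg_mul, mul_neg, neg_mul, zero_add, add_zero, mul_one] at this
  rw [neg_add_eq_sub, sub_eq_zero] at this
  exact this


lemma S_mul_R3T (hQ : Q.IsSymm) {τ : ℝ} (hu : IsUnit (R3 A Q B τ)) :
    ((R3 A Q B τ)⁻¹ * R4 A Q B τ) * (R3 A Q B τ)ᵀ = (R4 A Q B τ)ᵀ := by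
  have hd : IsUnit (R3 A Q B τ).det := (Matrix.isUnit_iff_isUnit_det _).mp hu
  rw [mul_assoc, ← id_iii A Q B hQ τ, ← mul_assoc, Matrix.nonsing_inv_mul _ hd, one_mul]

lemma S_symm (hQ : Q.IsSymm) {τ : ℝ} (hu : IsUnit (R3 A Q B τ)) :
    ((R3 A Q B τ)⁻¹ * R4 A Q B τ).IsSymm := by
  have hd : IsUnit (R3 A Q B τ)ᵀ.det := by
    rw [Matrix.det_transpose]; exact (Matrix.isUnit_iff_isUnit_det _).mp hu
  show _ = _
  calc ((R3 A Q B τ)⁻¹ * R4 A Q B τ)ᵀ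
      = (R4 A Q B τ)ᵀ * ((R3 A Q B τ)ᵀ)⁻¹ := by
        rw [Matrix.transpose_mul, Matrix.transpose_nonsing_inv]
    _ = ((R3 A Q B τ)⁻¹ * R4 A Q B τ) * ((R3 A Q B τ)ᵀ * ((R3 A Q B τ)ᵀ)⁻¹) := by
        rw [← S_mul_R3T A Q B hQ hu, mul_assoc]
    _ = (R3 A Q B τ)⁻¹ * R4 A Q B τ := by
        rw [Matrix.mul_nonsing_inv _ hd, mul_one]

lemma ZT_mul_R3 (hQ : Q.IsSymm) {τ : ℝ} (hu : IsUnit (R3 A Q B τ)) :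
    (R1 A Q B τ * ((R3 A Q B τ)⁻¹ * R4 A Q B τ) - R2 A Q B τ)ᵀ * R3 A Q B τ = 1 := by
  rw [Matrix.transpose_sub, Matrix.transpose_mul, (S_symm A Q B hQ hu).eq, Matrix.sub_mul,
    mul_assoc, id_i A Q B hQ τ, ← mul_assoc, S_mul_R3T A Q B hQ hu]
  exact id_ii A Q B hQ τ

lemma R3inv_eq (hQ : Q.IsSymm) {τ : ℝ} (hu : IsUnit (R3 A Q B τ)) :
    (R3 A Q B τ)⁻¹ = (R1 A Q B τ * ((R3 A Q B τ)⁻¹ * R4 A Q B τ) - R2 A Q B τ)ᵀ :=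
  Matrix.inv_eq_left_inv (ZT_mul_R3 A Q B hQ hu)

lemma R3_mul_S (hQ : Q.IsSymm) {τ : ℝ} (hu : IsUnit (R3 A Q B τ)) :
    R3 A Q B τ * ((R3 A Q B τ)⁻¹ * R4 A Q B τ) = R4 A Q B τ := by
  have hd : IsUnit (R3 A Q B τ).det := (Matrix.isUnit_iff_isUnit_det _).mp hu
  rw [← mul_assoc, Matrix.mul_nonsing_inv _ hd, one_mul]


attribute [local instance] Matrix.linftyOpNormedAddCommGroup Matrix.linftyOpNormedRing
  Matrix.linftyOpNormedAlgebra
example : CompleteSpace (Matrix (Fin n ⊕ Fin n) (Fin n ⊕ Fin n) ℝ) := by infer_instance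

lemma flow_eq (τ : ℝ) :
    flow A Q B τ = NormedSpace.exp ((-τ) • (Om n * Ham A Q B)) := rfl

lemma hasDerivAt_flow (τ : ℝ) :
    HasDerivAt (flow A Q B) (-(Om n * Ham A Q B) * flow A Q B τ) τ := by
  have h := hasDerivAt_exp_smul_const' (𝕂 := ℝ) (-(Om n * Ham A Q B)) τ
  have hfun : (fun u : ℝ => NormedSpace.exp (u • (-(Om n * Ham A Q B)))) = flow A Q B := by
    funext u
    rw [flow_eq, smul_neg, ← neg_smul]
  erw [hfun] at h
  erw [smul_neg, ← neg_smul, ← flow_eq] at h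
  exact h

def blockCLM21 (n : ℕ) : Matrix (Fin n ⊕ Fin n) (Fin n ⊕ Fin n) ℝ →L[ℝ] Matrix (Fin n) (Fin n) ℝ :=
  LinearMap.toContinuousLinearMap
    { toFun := Matrix.toBlocks₂₁
      map_add' := fun _ _ => rfl
      map_smul' := fun _ _ => rfl }

def blockCLM22 (n : ℕ) : Matrix (Fin n ⊕ Fin n) (Fin n ⊕ Fin n) ℝ →L[ℝ] Matrix (Fin n) (Fin n) ℝ :=
  LinearMap.toContinuousLinearMap
    { toFun := Matrix.toBlocks₂₂
      map_add' := fun _ _ => rfl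
      map_smul' := fun _ _ => rfl }

lemma negOmHam : -(Om n * Ham A Q B) = Matrix.fromBlocks (-Aᵀ) (-Q) (B * Bᵀ) A := by
  rw [Om, Ham, Matrix.fromBlocks_multiply]
  simp only [Matrix.zero_mul, Matrix.one_mul, Matrix.neg_mul, Matrix.mul_zero, zero_add, add_zero,
    Matrix.fromBlocks_neg, neg_neg, zero_mul, one_mul, neg_mul]

lemma hasDerivAt_R3 (τ : ℝ) :
    HasDerivAt (R3 A Q B) (B * Bᵀ * R1 A Q B τ + A * R3 A Q B τ) τ := by
  have h := ((blockCLM21 n).hasFDerivAt).comp_hasDerivAt τ (hasDerivAt_flow A Q B τ)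
  have hval : (blockCLM21 n) (-(Om n * Ham A Q B) * flow A Q B τ)
      = B * Bᵀ * R1 A Q B τ + A * R3 A Q B τ := by
    show Matrix.toBlocks₂₁ (-(Om n * Ham A Q B) * flow A Q B τ) = _
    rw [negOmHam, flow_eq_fromBlocks, Matrix.fromBlocks_multiply, Matrix.toBlocks_fromBlocks₂₁]
  rw [← hval]
  exact h

lemma hasDerivAt_R4 (τ : ℝ) :
    HasDerivAt (R4 A Q B) (B * Bᵀ * R2 A Q B τ + A * R4 A Q B τ) τ := by
  have h := ((blockCLM22 n).hasFDerivAt).comp_hasDerivAt τ (hasDerivAt_flow A Q B τ)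
  have hval : (blockCLM22 n) (-(Om n * Ham A Q B) * flow A Q B τ)
      = B * Bᵀ * R2 A Q B τ + A * R4 A Q B τ := by
    show Matrix.toBlocks₂₂ (-(Om n * Ham A Q B) * flow A Q B τ) = _
    rw [negOmHam, flow_eq_fromBlocks, Matrix.fromBlocks_multiply, Matrix.toBlocks_fromBlocks₂₂]
  rw [← hval]
  exact h

lemma hasDerivAt_R3inv {τ : ℝ} (hu : IsUnit (R3 A Q B τ)) :
    HasDerivAt (fun t => (R3 A Q B t)⁻¹)
      (-((R3 A Q B τ)⁻¹ * (B * Bᵀ * R1 A Q B τ + A * R3 A Q B τ) * (R3 A Q B τ)⁻¹)) τ := by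
  have h := (hasFDerivAt_ringInverse (𝕜 := ℝ) hu.unit).comp_hasDerivAt τ (hasDerivAt_R3 A Q B τ)
  have hcoe : ((hu.unit⁻¹ : _ˣ) : Matrix (Fin n) (Fin n) ℝ) = (R3 A Q B τ)⁻¹ := by
    rw [← Ring.inverse_unit hu.unit, hu.unit_spec, ← Matrix.nonsing_inv_eq_ringInverse]
  have hfun : Ring.inverse ∘ R3 A Q B = fun t => (R3 A Q B t)⁻¹ :=
    funext fun t => (Matrix.nonsing_inv_eq_ringInverse _).symm
  simp only [ContinuousLinearMap.coe_comp', Function.comp, ContinuousLinearMap.neg_apply,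
    ContinuousLinearMap.mulLeftRight_apply, IsUnit.unit_spec, hcoe] at h
  rw [hfun] at h
  exact h

lemma key_algebra {R : Type*} [Ring R] (G P1 P2 P3 P4 St X Aa : R)
    (hSt : G * P4 = St) (h34 : P3 * St = P4) :
    -(G * (X * P1 + Aa * P3) * G) * P4 + G * (X * P2 + Aa * P4) =
      -(G * X * (P1 * St - P2)) := by
  simp only [mul_add, add_mul, mul_sub, sub_mul, neg_mul, neg_add_rev, mul_assoc, hSt, h34]
  abel

lemma hasDerivAt_S (hQ : Q.IsSymm) {τ : ℝ} (hu : IsUnit (R3 A Q B τ)) :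
    HasDerivAt (fun t => (R3 A Q B t)⁻¹ * R4 A Q B t)
      (-((R1 A Q B τ * ((R3 A Q B τ)⁻¹ * R4 A Q B τ) - R2 A Q B τ)ᵀ * (B * Bᵀ) *
          (R1 A Q B τ * ((R3 A Q B τ)⁻¹ * R4 A Q B τ) - R2 A Q B τ))) τ := by
  have h := (hasDerivAt_R3inv A Q B hu).mul (hasDerivAt_R4 A Q B τ)
  have halg := key_algebra ((R3 A Q B τ)⁻¹) (R1 A Q B τ) (R2 A Q B τ) (R3 A Q B τ)
    (R4 A Q B τ) ((R3 A Q B τ)⁻¹ * R4 A Q B τ) (B * Bᵀ) A rfl (R3_mul_S A Q B hQ hu)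
  rw [halg] at h
  have hval : -((R3 A Q B τ)⁻¹ * (B * Bᵀ) *
        (R1 A Q B τ * ((R3 A Q B τ)⁻¹ * R4 A Q B τ) - R2 A Q B τ)) =
      -((R1 A Q B τ * ((R3 A Q B τ)⁻¹ * R4 A Q B τ) - R2 A Q B τ)ᵀ * (B * Bᵀ) *
        (R1 A Q B τ * ((R3 A Q B τ)⁻¹ * R4 A Q B τ) - R2 A Q B τ)) := by
    rw [← R3inv_eq A Q B hQ hu]
  rw [hval] at h
  exact h

lemma contDiff_flow : ContDiff ℝ (⊤ : ℕ∞) (flow A Q B) := by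
  have h1 : ContDiff ℝ (⊤ : ℕ∞) (fun t : ℝ => (-t) • (Om n * Ham A Q B)) :=
    (contDiff_id.neg).smul contDiff_const
  rw [contDiff_iff_contDiffAt]
  intro x
  exact ((NormedSpace.exp_analytic (𝕂 := ℝ) (((-x) • (Om n * Ham A Q B)))).contDiffAt).comp x h1.contDiffAt

lemma contDiffAt_S {τ : ℝ} (hu : IsUnit (R3 A Q B τ)) :
    ContDiffAt ℝ (⊤ : ℕ∞) (fun t => (R3 A Q B t)⁻¹ * R4 A Q B t) τ := by
  have cd3 : ContDiff ℝ (⊤ : ℕ∞) (R3 A Q B) := (blockCLM21 n).contDiff.comp (contDiff_flow A Q B)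
  have cd4 : ContDiff ℝ (⊤ : ℕ∞) (R4 A Q B) := (blockCLM22 n).contDiff.comp (contDiff_flow A Q B)
  have cdinv : ContDiffAt ℝ (⊤ : ℕ∞) (fun t => (R3 A Q B t)⁻¹) τ := by
    have h := (contDiffAt_ringInverse (𝕜 := ℝ) hu.unit).comp τ cd3.contDiffAt
    have hfun : Ring.inverse ∘ R3 A Q B = fun t => (R3 A Q B t)⁻¹ :=
      funext fun t => (Matrix.nonsing_inv_eq_ringInverse _).symm

    rw [← hfun]
    exact h
  exact cdinv.mul cd4.contDiffAt

def entryCLM (n : ℕ) (i j : Fin n) : Matrix (Fin n) (Fin n) ℝ →L[ℝ] ℝ :=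
  LinearMap.toContinuousLinearMap
    { toFun := fun M => M i j
      map_add' := fun _ _ => rfl
      map_smul' := fun _ _ => rfl }

def quadCLM (n : ℕ) (x : Fin n → ℝ) : Matrix (Fin n) (Fin n) ℝ →L[ℝ] ℝ :=
  LinearMap.toContinuousLinearMap
    { toFun := fun M => x ⬝ᵥ (M.mulVec x)
      map_add' := fun M N => by simp [Matrix.add_mulVec, dotProduct_add]
      map_smul' := fun c M => by simp [Matrix.smul_mulVec, dotProduct_smul] }

lemma hasDerivAt_S_entry (hQ : Q.IsSymm) {τ : ℝ} (hu : IsUnit (R3 A Q B τ)) (i j : Fin n) :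
    HasDerivAt (fun t => ((R3 A Q B t)⁻¹ * R4 A Q B t) i j)
      ((-((R1 A Q B τ * ((R3 A Q B τ)⁻¹ * R4 A Q B τ) - R2 A Q B τ)ᵀ * (B * Bᵀ) *
          (R1 A Q B τ * ((R3 A Q B τ)⁻¹ * R4 A Q B τ) - R2 A Q B τ))) i j) τ :=
  ((entryCLM n i j).hasFDerivAt).comp_hasDerivAt τ (hasDerivAt_S A Q B hQ hu)

lemma hasDerivAt_S_quad (hQ : Q.IsSymm) {τ : ℝ} (hu : IsUnit (R3 A Q B τ)) (x : Fin n → ℝ) :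
    HasDerivAt (fun t => x ⬝ᵥ (((R3 A Q B t)⁻¹ * R4 A Q B t).mulVec x))
      (x ⬝ᵥ ((-((R1 A Q B τ * ((R3 A Q B τ)⁻¹ * R4 A Q B τ) - R2 A Q B τ)ᵀ * (B * Bᵀ) *
          (R1 A Q B τ * ((R3 A Q B τ)⁻¹ * R4 A Q B τ) - R2 A Q B τ))).mulVec x)) τ :=
  ((quadCLM n x).hasFDerivAt).comp_hasDerivAt τ (hasDerivAt_S A Q B hQ hu)

lemma contDiffAt_S_entry {τ : ℝ} (hu : IsUnit (R3 A Q B τ)) (i j : Fin n) :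
    ContDiffAt ℝ (⊤ : ℕ∞) (fun t => ((R3 A Q B t)⁻¹ * R4 A Q B t) i j) τ :=
  ((entryCLM n i j).contDiff.contDiffAt).comp τ (contDiffAt_S A Q B hu)

lemma psd_ZBZ (Z : Matrix (Fin n) (Fin n) ℝ) : (Zᵀ * (B * Bᵀ) * Z).PosSemidef := by
  have h := Matrix.posSemidef_conjTranspose_mul_self (Bᵀ * Z)
  have e : (Bᵀ * Z)ᴴ * (Bᵀ * Z) = Zᵀ * (B * Bᵀ) * Z := by
    rw [Matrix.conjTranspose_eq_transpose_of_trivial, Matrix.transpose_mul,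
      Matrix.transpose_transpose]
    simp only [Matrix.mul_assoc]
  rwa [e] at h

lemma S_mono (hQ : Q.IsSymm) {T : ℝ}
    (hR3 : ∀ τ ∈ Set.Ioc (0:ℝ) T, IsUnit (R3 A Q B τ))
    {τ₁ τ₂ : ℝ} (h1 : 0 < τ₁) (h12 : τ₁ ≤ τ₂) (h2 : τ₂ ≤ T) :
    (((R3 A Q B τ₁)⁻¹ * R4 A Q B τ₁) - ((R3 A Q B τ₂)⁻¹ * R4 A Q B τ₂)).PosSemidef := by
  have hu1 : IsUnit (R3 A Q B τ₁) := hR3 τ₁ ⟨h1, h12.trans h2⟩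
  have hu2 : IsUnit (R3 A Q B τ₂) := hR3 τ₂ ⟨h1.trans_le h12, h2⟩
  have hIcc : Set.Icc τ₁ τ₂ ⊆ Set.Ioc (0:ℝ) T := fun t ht => ⟨h1.trans_le ht.1, ht.2.trans h2⟩
  refine Matrix.posSemidef_iff_dotProduct_mulVec.mpr ⟨?_, ?_⟩
  · rw [Matrix.IsHermitian, Matrix.conjTranspose_eq_transpose_of_trivial, Matrix.transpose_sub,
      (S_symm A Q B hQ hu1).eq, (S_symm A Q B hQ hu2).eq]
  · intro x
    set f : ℝ → ℝ := fun t => x ⬝ᵥ (((R3 A Q B t)⁻¹ * R4 A Q B t).mulVec x) with hf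
    have hD : ∀ t ∈ Set.Icc τ₁ τ₂, HasDerivAt f
        (x ⬝ᵥ ((-((R1 A Q B t * ((R3 A Q B t)⁻¹ * R4 A Q B t) - R2 A Q B t)ᵀ * (B * Bᵀ) *
          (R1 A Q B t * ((R3 A Q B t)⁻¹ * R4 A Q B t) - R2 A Q B t))).mulVec x)) t :=
      fun t ht => hasDerivAt_S_quad A Q B hQ (hR3 t (hIcc ht)) x
    have hle : f τ₂ ≤ f τ₁ := by
      have hanti := antitoneOn_of_deriv_nonpos (convex_Icc τ₁ τ₂)
        (fun t ht => ((hD t ht).continuousAt).continuousWithinAt)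
        (fun t ht => by
          have ht' : t ∈ Set.Icc τ₁ τ₂ := interior_subset ht
          exact ((hD t ht').differentiableAt).differentiableWithinAt)
        (fun t ht => by
          have ht' : t ∈ Set.Icc τ₁ τ₂ := interior_subset ht
          rw [(hD t ht').deriv]
          rw [Matrix.neg_mulVec, dotProduct_neg, neg_nonpos]
          have := (psd_ZBZ B (R1 A Q B t * ((R3 A Q B t)⁻¹ * R4 A Q B t) - R2 A Q B t)).dotProduct_mulVec_nonneg x
          simpa using this)
      exact hanti (Set.left_mem_Icc.mpr h12) (Set.right_mem_Icc.mpr h12) h12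
    have : x ⬝ᵥ ((((R3 A Q B τ₁)⁻¹ * R4 A Q B τ₁) -
        ((R3 A Q B τ₂)⁻¹ * R4 A Q B τ₂)).mulVec x) = f τ₁ - f τ₂ := by
      rw [Matrix.sub_mulVec, dotProduct_sub]
    simp only [star_trivial]
    rw [this]
    exact sub_nonneg.mpr hle

end SAux

/-- The `S` matrix `S(τ) = R₃(τ)⁻¹R₄(τ)`: it is symmetric, smooth on `(0,T]`, its
derivative is `S'(τ) = −Z_V(τ)ᵀ B Bᵀ Z_V(τ) ⪯ 0` where `Z_V(τ) = R₁(τ)S(τ) − R₂(τ)`,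
and `S` is non-increasing in the Loewner order. -/
theorem S_matrix
    {n m : ℕ} (hm : 1 ≤ m) (hmn : m ≤ n)
    (A Q : Matrix (Fin n) (Fin n) ℝ) (B : Matrix (Fin n) (Fin m) ℝ)
    (hQ : Q.IsSymm) (hB : B.rank = m)
    (T : ℝ) (hT : 0 < T) (hKal : Kalman A B)
    (hR3 : ∀ τ ∈ Set.Ioc 0 T, IsUnit (R3 A Q B τ)) :
    letI S : ℝ → Matrix (Fin n) (Fin n) ℝ := fun τ => (R3 A Q B τ)⁻¹ * R4 A Q B τ
    letI ZV : ℝ → Matrix (Fin n) (Fin n) ℝ := fun τ => R1 A Q B τ * S τ - R2 A Q B τ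
    (∀ τ ∈ Set.Ioc (0:ℝ) T, (S τ).IsSymm) ∧
    (∀ i j : Fin n, ContDiffOn ℝ (⊤ : ℕ∞) (fun τ => S τ i j) (Set.Ioc (0:ℝ) T)) ∧
    (∀ τ ∈ Set.Ioc (0:ℝ) T, ∀ i j : Fin n,
      HasDerivAt (fun r => S r i j) ((-((ZV τ)ᵀ * (B * Bᵀ) * ZV τ)) i j) τ) ∧
    (∀ τ ∈ Set.Ioc (0:ℝ) T, ((ZV τ)ᵀ * (B * Bᵀ) * ZV τ).PosSemidef) ∧
    (∀ τ₁ τ₂ : ℝ, 0 < τ₁ → τ₁ ≤ τ₂ → τ₂ ≤ T → (S τ₁ - S τ₂).PosSemidef) := by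

  refine ⟨?_, ?_, ?_, ?_, ?_⟩
  · exact fun τ hτ => S_symm A Q B hQ (hR3 τ hτ)
  · exact fun i j τ hτ => (contDiffAt_S_entry A Q B (hR3 τ hτ) i j).contDiffWithinAt
  · exact fun τ hτ i j => hasDerivAt_S_entry A Q B hQ (hR3 τ hτ) i j
  · exact fun τ hτ => psd_ZBZ B _
  · exact fun τ₁ τ₂ h1 h12 h2 => S_mono A Q B hQ hR3 h1 h12 h2


end LQ
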